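/- arXiv:2601.20694 — 4 statements merged into one kernel-verified Lean document; each statement's English description precedes it below -/
import Mathlib

section
/- Let T be a measurable space, ξ^1, …, ξ^K i.i.d. T-valued random variables (K ≥ 1), Π a finite nonempty index set, H > 0, and g : Π × T → [0, H] measurable. Define v(π) := E[g(π, ξ^1)] and the empirical values v̂(π) := (1/K) ∑_{l=1}^{K} g(π, ξ^l). Let π̂ be a measurable Π-valued random element with v̂(π̂(ω))(ω) = max_{π ∈ Π} v̂(π)(ω) for every ω. Then E[max_{π ∈ Π} v(π) − v(π̂)] ≤ √(H² log|Π| / K). -/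
/-!
Since `π̂` maximizes the empirical values `v̂`, the regret against a maximizer `π*` of `v` satisfies
`v π* - v π̂ ≤ (v̂ π̂ - v π̂) - (v̂ π* - v π*) ≤ max_π (v̂ π - v π) - (v̂ π* - v π*)`, and the last
term has mean zero. By Hoeffding's lemma each `v̂ π - v π`, an average of `K` independent centered
`[0, H]`-valued variables, is sub-Gaussian with variance proxy `H² / (4K)`, and the expected
maximum of `n` variables with variance proxy `σ²` is at most `√(2 σ² log n)`.
-/

open MeasureTheory ProbabilityTheory Real NNReal Finset

lemma le_sqrt_of_forall_mul_le_add_sq {E a c : ℝ} (ha : 0 ≤ a) (hc : 0 ≤ c)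
    (h : ∀ t > 0, t * E ≤ a + c * t ^ 2 / 2) : E ≤ √(2 * c * a) := by
  rcases le_or_gt E 0 with hE | hE
  · exact hE.trans (sqrt_nonneg _)
  rcases hc.eq_or_lt with rfl | hc
  · have := h ((a + 1) / E) (by positivity)
    rw [div_mul_cancel₀ _ hE.ne'] at this
    linarith
  · rw [le_sqrt hE.le (by positivity)]
    have := h (E / c) (by positivity)
    field_simp at this
    nlinarith

lemma sub_le_iSup_sub_sub_of_eq_iSup {ι : Type*} [Finite ι] {f f' : ι → ℝ} {i : ι}
    (hi : f' i = ⨆ k, f' k) (j : ι) : f j - f i ≤ (⨆ k, (f' k - f k)) - (f' j - f j) := by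
  have hj : f' j ≤ f' i := hi ▸ le_ciSup (Set.finite_range f').bddAbove j
  have hi' : f' i - f i ≤ ⨆ k, (f' k - f k) :=
    le_ciSup (Set.finite_range fun k ↦ f' k - f k).bddAbove i
  linarith

lemma MeasureTheory.Integrable.iSup {Ω ι : Type*} [MeasurableSpace Ω] {μ : Measure Ω}
    [Finite ι] [Nonempty ι] {X : ι → Ω → ℝ} (hX : ∀ i, Integrable (X i) μ) :
    Integrable (fun ω ↦ ⨆ i, X i ω) μ := by
  have := Fintype.ofFinite ι
  have hsup : (fun ω ↦ ⨆ i, X i ω) = univ.sup' univ_nonempty X := by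
    ext ω
    rw [Finset.sup'_apply, sup'_univ_eq_ciSup]
  rw [hsup]
  exact sup'_induction (p := (Integrable · μ)) _ _ (fun _ h₁ _ h₂ ↦ h₁.sup h₂) fun i _ ↦ hX i

section

variable {Ω : Type*} [MeasurableSpace Ω] {μ : Measure Ω}

lemma ProbabilityTheory.hasSubgaussianMGF_average_sub_of_mem_Icc [IsProbabilityMeasure μ]
    {ι : Type*} [Fintype ι] [Nonempty ι] {Y : ι → Ω → ℝ} {a b m : ℝ}
    (hindep : iIndepFun Y μ) (hY : ∀ i, AEMeasurable (Y i) μ)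
    (hab : ∀ i, ∀ᵐ ω ∂μ, Y i ω ∈ Set.Icc a b) (hm : ∀ i, μ[Y i] = m) :
    HasSubgaussianMGF (fun ω ↦ (Fintype.card ι : ℝ)⁻¹ * ∑ i, Y i ω - m)
      ((‖b - a‖₊ / 2) ^ 2 / Fintype.card ι) μ := by
  have hcentered : ∀ i, HasSubgaussianMGF (fun ω ↦ Y i ω - m) ((‖b - a‖₊ / 2) ^ 2) μ :=
    fun i ↦ hm i ▸ hasSubgaussianMGF_of_mem_Icc (hY i) (hab i)
  have hsum := HasSubgaussianMGF.sum_of_iIndepFun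
    (hindep.comp (fun _ y ↦ y - m) fun _ ↦ measurable_sub_const m) (s := univ)
    fun i _ ↦ hcentered i
  have hn : (Fintype.card ι : ℝ) ≠ 0 := Nat.cast_ne_zero.mpr Fintype.card_ne_zero
  convert hsum.const_mul (Fintype.card ι : ℝ)⁻¹ using 1
  · ext ω
    simp only [Function.comp_apply, sum_sub_distrib, sum_const, card_univ, nsmul_eq_mul]
    field_simp
  · ext
    change _ = (Fintype.card ι : ℝ)⁻¹ ^ 2 * ((∑ _i : ι, (‖b - a‖₊ / 2) ^ 2 : ℝ≥0) : ℝ)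
    simp only [NNReal.coe_div, NNReal.coe_pow, coe_nnnorm, norm_eq_abs, NNReal.coe_ofNat,
      NNReal.coe_natCast, inv_pow, sum_const, card_univ, nsmul_eq_mul, NNReal.coe_mul]
    field_simp

/- Jensen's inequality for `exp` and the union bound `exp (t max_i X_i) ≤ ∑_i exp (t X_i)` give
`t E[max_i X_i] ≤ log n + c t² / 2` for every `t > 0`. -/
lemma ProbabilityTheory.integral_iSup_le_sqrt_of_hasSubgaussianMGF [IsProbabilityMeasure μ]
    {ι : Type*} [Fintype ι] [Nonempty ι] {X : ι → Ω → ℝ} {c : ℝ≥0}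
    (hX : ∀ i, HasSubgaussianMGF (X i) c μ) :
    ∫ ω, ⨆ i, X i ω ∂μ ≤ √(2 * c * log (Fintype.card ι)) := by
  have hsup : Integrable (fun ω ↦ ⨆ i, X i ω) μ := Integrable.iSup fun i ↦ (hX i).integrable
  refine le_sqrt_of_forall_mul_le_add_sq (log_natCast_nonneg _) c.2 fun t ht ↦ ?_
  have hunion : ∀ ω, exp (t * ⨆ i, X i ω) ≤ ∑ i, exp (t * X i ω) := fun ω ↦ by
    obtain ⟨i, hi⟩ := exists_eq_ciSup_of_finite (f := fun i ↦ X i ω)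
    rw [← hi]
    exact single_le_sum (f := fun i ↦ exp (t * X i ω)) (fun _ _ ↦ (exp_pos _).le) (mem_univ i)
  have hexp_int : Integrable (fun ω ↦ exp (t * ⨆ i, X i ω)) μ :=
    (integrable_finsetSum _ fun i _ ↦ (hX i).integrable_exp_mul t).mono'
      (continuous_exp.comp_aestronglyMeasurable (hsup.const_mul t).1)
      (ae_of_all _ fun ω ↦ by rw [norm_of_nonneg (exp_pos _).le]; exact hunion ω)
  have hjensen : exp (t * ∫ ω, ⨆ i, X i ω ∂μ) ≤ Fintype.card ι * exp (c * t ^ 2 / 2) :=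
    calc exp (t * ∫ ω, ⨆ i, X i ω ∂μ)
        = exp (∫ ω, t * ⨆ i, X i ω ∂μ) := by rw [integral_const_mul]
      _ ≤ ∫ ω, exp (t * ⨆ i, X i ω) ∂μ :=
        convexOn_exp.map_integral_le continuousOn_exp isClosed_univ (ae_of_all _ fun _ ↦ trivial)
          (hsup.const_mul t) hexp_int
      _ ≤ ∫ ω, ∑ i, exp (t * X i ω) ∂μ :=
        integral_mono hexp_int (integrable_finsetSum _ fun i _ ↦ (hX i).integrable_exp_mul t) hunion
      _ = ∑ i, mgf (X i) μ t := integral_finsetSum _ fun i _ ↦ (hX i).integrable_exp_mul t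
      _ ≤ ∑ _i : ι, exp (c * t ^ 2 / 2) := sum_le_sum fun i _ ↦ (hX i).mgf_le t
      _ = Fintype.card ι * exp (c * t ^ 2 / 2) := by simp
  have hn : (0 : ℝ) < Fintype.card ι := by exact_mod_cast Fintype.card_pos
  calc t * ∫ ω, ⨆ i, X i ω ∂μ ≤ log (Fintype.card ι * exp (c * t ^ 2 / 2)) :=
        (le_log_iff_exp_le (by positivity)).mpr hjensen
    _ = log (Fintype.card ι) + c * t ^ 2 / 2 := by rw [log_mul hn.ne' (exp_pos _).ne', log_exp]

lemma integral_inv_card_mul_sum_eq {ι : Type*} [Fintype ι] [Nonempty ι] {Y : ι → Ω → ℝ} {m : ℝ}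
    (hY : ∀ i, Integrable (Y i) μ) (hm : ∀ i, μ[Y i] = m) :
    ∫ ω, (Fintype.card ι : ℝ)⁻¹ * ∑ i, Y i ω ∂μ = m := by
  have hn : (Fintype.card ι : ℝ) ≠ 0 := Nat.cast_ne_zero.mpr Fintype.card_ne_zero
  rw [integral_const_mul, integral_finsetSum _ fun i _ ↦ hY i]
  simp [hm, hn]

lemma integral_iSup_sub_le_integral_iSup_sub [IsProbabilityMeasure μ] {ι : Type*} [Finite ι]
    [Nonempty ι] {V : ι → Ω → ℝ} {v : ι → ℝ} {ihat : Ω → ι} (hV : ∀ i, Integrable (V i) μ)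
    (hv : ∀ i, μ[V i] = v i) (hihat : ∀ ω, V (ihat ω) ω = ⨆ i, V i ω) :
    ∫ ω, (⨆ i, v i) - v (ihat ω) ∂μ ≤ ∫ ω, ⨆ i, (V i ω - v i) ∂μ := by
  obtain ⟨j, hj⟩ := exists_eq_ciSup_of_finite (f := v)
  have hdev : ∀ i, Integrable (fun ω ↦ V i ω - v i) μ := fun i ↦ (hV i).sub (integrable_const _)
  have hsup := Integrable.iSup hdev
  have hcentered : ∫ ω, (V j ω - v j) ∂μ = 0 := by
    simp [integral_sub (hV j) (integrable_const _), hv j]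
  calc ∫ ω, (⨆ i, v i) - v (ihat ω) ∂μ
      ≤ ∫ ω, (⨆ i, (V i ω - v i)) - (V j ω - v j) ∂μ :=
        integral_mono_of_nonneg
          (ae_of_all _ fun ω ↦ sub_nonneg.2 (le_ciSup (Set.finite_range v).bddAbove _))
          (hsup.sub (hdev j)) (ae_of_all _ fun ω ↦ hj ▸ sub_le_iSup_sub_sub_of_eq_iSup (hihat ω) j)
    _ = ∫ ω, ⨆ i, (V i ω - v i) ∂μ := by rw [integral_sub hsup (hdev j), hcentered, sub_zero]

end

theorem ftl_policy_class_expected_regret_general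
    {Ω : Type*} [MeasurableSpace Ω] (μ : Measure Ω) [IsProbabilityMeasure μ]
    {T : Type*} [MeasurableSpace T]
    (K : ℕ) (hK : 1 ≤ K)
    (ξ : Fin K → Ω → T)
    (hξmeas : ∀ l, Measurable (ξ l))
    (hindep : iIndepFun ξ μ)
    (hident : ∀ l, μ.map (ξ l) = μ.map (ξ ⟨0, hK⟩))
    {Pol : Type*} [Fintype Pol] [Nonempty Pol] [MeasurableSpace Pol]
    (H : ℝ)
    (g : Pol → T → ℝ)
    (hgmeas : Measurable (fun p : Pol × T => g p.1 p.2))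
    (hg0 : ∀ p t, 0 ≤ g p t) (hgH : ∀ p t, g p t ≤ H)
    (v : Pol → ℝ) (hv : ∀ p, v p = ∫ ω, g p (ξ ⟨0, hK⟩ ω) ∂μ)
    (πhat : Ω → Pol)
    (hmax : ∀ ω,
      (K : ℝ)⁻¹ * ∑ l, g (πhat ω) (ξ l ω)
        = ⨆ p, (K : ℝ)⁻¹ * ∑ l, g p (ξ l ω)) :
    ∫ ω, ((⨆ p, v p) - v (πhat ω)) ∂μ
      ≤ Real.sqrt (H ^ 2 * Real.log (Fintype.card Pol) / K) := by
  have : NeZero K := ⟨by omega⟩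
  have hgp : ∀ p, Measurable (g p) := fun p ↦ hgmeas.comp measurable_prodMk_left
  have hY : ∀ p l, AEMeasurable (fun ω ↦ g p (ξ l ω)) μ :=
    fun p l ↦ ((hgp p).comp (hξmeas l)).aemeasurable
  have hY_mem : ∀ p l, ∀ᵐ ω ∂μ, g p (ξ l ω) ∈ Set.Icc 0 H :=
    fun p l ↦ ae_of_all _ fun ω ↦ ⟨hg0 _ _, hgH _ _⟩
  have hY_int : ∀ p l, Integrable (fun ω ↦ g p (ξ l ω)) μ :=
    fun p l ↦ .of_mem_Icc 0 H (hY p l) (hY_mem p l)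
  have hunbiased : ∀ p l, ∫ ω, g p (ξ l ω) ∂μ = v p := fun p l ↦ by
    rw [hv p, ← integral_map (hξmeas l).aemeasurable (hgp p).aestronglyMeasurable, hident l,
      integral_map (hξmeas _).aemeasurable (hgp p).aestronglyMeasurable]
  have hmean : ∀ p, ∫ ω, (K : ℝ)⁻¹ * ∑ l, g p (ξ l ω) ∂μ = v p := fun p ↦ by
    simpa using integral_inv_card_mul_sum_eq (hY_int p) (hunbiased p)
  have hsubG : ∀ p, HasSubgaussianMGF (fun ω ↦ (K : ℝ)⁻¹ * ∑ l, g p (ξ l ω) - v p)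
      ((‖H‖₊ / 2) ^ 2 / K) μ := fun p ↦ by
    simpa using hasSubgaussianMGF_average_sub_of_mem_Icc
      (hindep.comp (fun _ ↦ g p) fun _ ↦ hgp p) (hY p) (hY_mem p) (hunbiased p)
  calc ∫ ω, ((⨆ p, v p) - v (πhat ω)) ∂μ
      ≤ ∫ ω, ⨆ p, ((K : ℝ)⁻¹ * ∑ l, g p (ξ l ω) - v p) ∂μ :=
        integral_iSup_sub_le_integral_iSup_sub
          (fun p ↦ (integrable_finsetSum _ fun l _ ↦ hY_int p l).const_mul _) hmean hmax
    _ ≤ √(2 * ((‖H‖₊ / 2) ^ 2 / K : ℝ≥0) * log (Fintype.card Pol)) :=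
        integral_iSup_le_sqrt_of_hasSubgaussianMGF hsubG
    _ ≤ √(H ^ 2 * log (Fintype.card Pol) / K) := by
        refine sqrt_le_sqrt ?_
        simp only [NNReal.coe_div, NNReal.coe_pow, coe_nnnorm, norm_eq_abs, NNReal.coe_ofNat,
          NNReal.coe_natCast, div_pow, sq_abs]
        have := log_natCast_nonneg (Fintype.card Pol)
        rw [← sub_nonneg]
        ring_nf
        positivity

/-- **Follow-The-Leader / ERM over a finite policy class: expected regret.**
Let `ξ 1, …, ξ K` be i.i.d. `T`-valued random variables, `Pol` a finite
nonempty policy class, and `g : Pol × T → [0,H]` measurable. With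
`v π = E[g π (ξ 1)]` and empirical values `v̂ π = K⁻¹ ∑ l, g π (ξ l)`, if
`πhat` measurably maximizes `v̂`, then
`E[max_π v π − v πhat] ≤ √(H² log |Pol| / K)`. -/
theorem ftl_policy_class_expected_regret
    {Ω : Type*} [MeasurableSpace Ω] (μ : Measure Ω) [IsProbabilityMeasure μ]
    {T : Type*} [MeasurableSpace T]
    (K : ℕ) (hK : 1 ≤ K)
    (ξ : Fin K → Ω → T)
    (hξmeas : ∀ l, Measurable (ξ l))
    (hindep : iIndepFun ξ μ)
    (hident : ∀ l, μ.map (ξ l) = μ.map (ξ ⟨0, hK⟩))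
    {Pol : Type*} [Fintype Pol] [Nonempty Pol] [MeasurableSpace Pol]
    (H : ℝ) (hH : 0 < H)
    (g : Pol → T → ℝ)
    (hgmeas : Measurable (fun p : Pol × T => g p.1 p.2))
    (hg0 : ∀ p t, 0 ≤ g p t) (hgH : ∀ p t, g p t ≤ H)
    (v : Pol → ℝ) (hv : ∀ p, v p = ∫ ω, g p (ξ ⟨0, hK⟩ ω) ∂μ)
    (πhat : Ω → Pol) (hπhat : Measurable πhat)
    (hmax : ∀ ω,
      (K : ℝ)⁻¹ * ∑ l, g (πhat ω) (ξ l ω)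
        = ⨆ p, (K : ℝ)⁻¹ * ∑ l, g p (ξ l ω)) :
    ∫ ω, ((⨆ p, v p) - v (πhat ω)) ∂μ
      ≤ Real.sqrt (H ^ 2 * Real.log (Fintype.card Pol) / K) :=
  ftl_policy_class_expected_regret_general μ K hK ξ hξmeas hindep hident H g hgmeas hg0 hgH v hv
    πhat hmax
end

section
/- Consider a finite-horizon MDP framework with horizon H ≥ 1 and two MDPs M = (P, r) and M' = (P', r) sharing the same reward functions r_h : S × 𝒜 → [0,1]. Suppose that for all h ∈ {1,…,H}, s ∈ S, a ∈ 𝒜, the one-step model error satisfies ∑_{s' ∈ S} |P_h(s'|s,a) − P'_h(s'|s,a)| ≤ ε. Then for every deterministic policy π and every state s ∈ S, |V^{π,M}_1(s) − V^{π,M'}_1(s)| ≤ (H²/2)·ε. -/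
/-- The value function `V^{π,M}_h` of a deterministic policy `π` in the
finite-horizon MDP with horizon `H`, transition kernels `P` and rewards `r`,
defined by the backward recursion `V_{H+1} ≡ 0` and
`V_h(s) = r_h(s, π_h s) + ∑_{s'} P_h(s'|s, π_h s) V_{h+1}(s')`. -/
noncomputable def Vval {S A : Type*} [Fintype S] (H : ℕ)
    (P : ℕ → S → A → S → ℝ) (r : ℕ → S → A → ℝ) (π : ℕ → S → A)
    (h : ℕ) (s : S) : ℝ :=
  if _hle : h ≤ H then
    r h s (π h s) + ∑ s' : S, P h s (π h s) s' * Vval H P r π (h + 1) s'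
  else 0
termination_by H + 1 - h
decreasing_by omega

lemma Vval_nonneg {S A : Type*} [Fintype S] (H : ℕ)
    (P : ℕ → S → A → S → ℝ) (r : ℕ → S → A → ℝ) (π : ℕ → S → A)
    (hP : ∀ h s a, (∀ s', 0 ≤ P h s a s') ∧ ∑ s' : S, P h s a s' = 1)
    (hr : ∀ h s a, 0 ≤ r h s a ∧ r h s a ≤ 1) :
    ∀ n h s, H + 1 - h = n → 0 ≤ Vval H P r π h s := by
  intro n
  induction n with
  | zero =>
    intro h s hn
    rw [Vval]
    have : ¬ h ≤ H := by omega
    simp [this]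
  | succ n ih =>
    intro h s hn
    rw [Vval]
    by_cases hle : h ≤ H
    · simp only [hle, dif_pos]
      have h1 : 0 ≤ r h s (π h s) := (hr h s (π h s)).1
      have h2 : 0 ≤ ∑ s' : S, P h s (π h s) s' * Vval H P r π (h + 1) s' := by
        apply Finset.sum_nonneg
        intro s' _
        exact mul_nonneg ((hP h s (π h s)).1 s') (ih (h+1) s' (by omega))
      linarith
    · simp [hle]

lemma Vval_le {S A : Type*} [Fintype S] (H : ℕ)
    (P : ℕ → S → A → S → ℝ) (r : ℕ → S → A → ℝ) (π : ℕ → S → A)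
    (hP : ∀ h s a, (∀ s', 0 ≤ P h s a s') ∧ ∑ s' : S, P h s a s' = 1)
    (hr : ∀ h s a, 0 ≤ r h s a ∧ r h s a ≤ 1) :
    ∀ n h s, H + 1 - h = n → Vval H P r π h s ≤ ((H + 1 - h : ℕ) : ℝ) := by
  intro n
  induction n with
  | zero =>
    intro h s hn
    rw [Vval]
    have : ¬ h ≤ H := by omega
    simp [this]
  | succ n ih =>
    intro h s hn
    rw [Vval]
    by_cases hle : h ≤ H
    · simp only [hle, dif_pos]
      have h1 : r h s (π h s) ≤ 1 := (hr h s (π h s)).2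
      have h2 : ∑ s' : S, P h s (π h s) s' * Vval H P r π (h + 1) s'
          ≤ ∑ s' : S, P h s (π h s) s' * ((H - h : ℕ) : ℝ) := by
        apply Finset.sum_le_sum
        intro s' _
        apply mul_le_mul_of_nonneg_left _ ((hP h s (π h s)).1 s')
        have := ih (h+1) s' (by omega)
        have heq : H + 1 - (h + 1) = H - h := by omega
        rwa [heq] at this
      rw [← Finset.sum_mul, (hP h s (π h s)).2, one_mul] at h2
      have hc : ((H + 1 - h : ℕ) : ℝ) = ((H - h : ℕ) : ℝ) + 1 := by
        have hq : H + 1 - h = (H - h) + 1 := by omega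
        rw [hq]; push_cast; ring
      rw [hc]
      linarith
    · have : H + 1 - h = 0 := by omega
      simp [hle, this]

/-- **Uniform simulation lemma.** For two finite-horizon MDPs `M = (P, r)` and
`M' = (P', r)` with the same rewards `r_h ∈ [0,1]`, if the one-step model
error satisfies `∑_{s'} |P_h(s'|s,a) − P'_h(s'|s,a)| ≤ ε` for all
`h ∈ {1,…,H}`, `s`, `a`, then for every deterministic policy `π` and every
state `s`, `|V^{π,M}_1(s) − V^{π,M'}_1(s)| ≤ (H²/2) ε`. -/
theorem simulation_lemma_uniform
    {S A : Type*} [Fintype S] [Fintype A]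
    (H : ℕ) (hH : 1 ≤ H)
    (P P' : ℕ → S → A → S → ℝ) (r : ℕ → S → A → ℝ)
    (hP : ∀ h s a, (∀ s', 0 ≤ P h s a s') ∧ ∑ s' : S, P h s a s' = 1)
    (hP' : ∀ h s a, (∀ s', 0 ≤ P' h s a s') ∧ ∑ s' : S, P' h s a s' = 1)
    (hr : ∀ h s a, 0 ≤ r h s a ∧ r h s a ≤ 1)
    (ε : ℝ)
    (hε : ∀ h, 1 ≤ h → h ≤ H → ∀ s a,
      ∑ s' : S, |P h s a s' - P' h s a s'| ≤ ε)
    (π : ℕ → S → A) (s : S) :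
    |Vval H P r π 1 s - Vval H P' r π 1 s| ≤ ((H : ℝ) ^ 2 / 2) * ε := by
  have hε0 : 0 ≤ ε := by
    refine le_trans ?_ (hε 1 le_rfl hH s (π 1 s))
    exact Finset.sum_nonneg fun s' _ => abs_nonneg _
  have key : ∀ n h, H + 1 - h = n → 1 ≤ h → ∀ s,
      |Vval H P r π h s - Vval H P' r π h s| ≤ ε * ((H + 1 - h : ℕ) : ℝ)^2 / 2 := by
    intro n
    induction n with
    | zero =>
      intro h hn _ s
      have hnle : ¬ h ≤ H := by omega
      rw [Vval, Vval]
      simp only [hnle, dif_neg, not_false_iff, sub_zero, abs_zero]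
      positivity
    | succ n ih =>
      intro h hn hh1 s
      by_cases hle : h ≤ H
      · rw [Vval, Vval]
        simp only [hle, dif_pos]
        set a := π h s
        have split : (r h s a + ∑ s' : S, P h s a s' * Vval H P r π (h + 1) s')
            - (r h s a + ∑ s' : S, P' h s a s' * Vval H P' r π (h + 1) s')
            = (∑ s' : S, P h s a s' * (Vval H P r π (h + 1) s' - Vval H P' r π (h + 1) s'))
            + (∑ s' : S, (P h s a s' - P' h s a s') * Vval H P' r π (h + 1) s') := by
          rw [← Finset.sum_add_distrib]
          have : ∑ x : S,
              (P h s a x * (Vval H P r π (h + 1) x - Vval H P' r π (h + 1) x) +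
                (P h s a x - P' h s a x) * Vval H P' r π (h + 1) x)
              = ∑ x : S, (P h s a x * Vval H P r π (h + 1) x
                - P' h s a x * Vval H P' r π (h + 1) x) :=
            Finset.sum_congr rfl fun x _ => by ring
          rw [this, Finset.sum_sub_distrib]
          ring
        rw [split]
        have b1 : |∑ s' : S, P h s a s' * (Vval H P r π (h + 1) s' - Vval H P' r π (h + 1) s')|
            ≤ ε * ((H - h : ℕ) : ℝ)^2 / 2 := by
          calc |∑ s' : S, P h s a s' * (Vval H P r π (h + 1) s' - Vval H P' r π (h + 1) s')|
              ≤ ∑ s' : S, |P h s a s' * (Vval H P r π (h + 1) s' - Vval H P' r π (h + 1) s')| :=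
                Finset.abs_sum_le_sum_abs _ _
            _ ≤ ∑ s' : S, P h s a s' * (ε * ((H - h : ℕ) : ℝ)^2 / 2) := by
                apply Finset.sum_le_sum
                intro s' _
                rw [abs_mul, abs_of_nonneg ((hP h s a).1 s')]
                apply mul_le_mul_of_nonneg_left _ ((hP h s a).1 s')
                have := ih (h+1) (by omega) (by omega) s'
                have heq : H + 1 - (h + 1) = H - h := by omega
                rwa [heq] at this
            _ = ε * ((H - h : ℕ) : ℝ)^2 / 2 := by
                rw [← Finset.sum_mul, (hP h s a).2, one_mul]
        have b2 : |∑ s' : S, (P h s a s' - P' h s a s') * Vval H P' r π (h + 1) s'|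
            ≤ ((H - h : ℕ) : ℝ) * ε := by
          calc |∑ s' : S, (P h s a s' - P' h s a s') * Vval H P' r π (h + 1) s'|
              ≤ ∑ s' : S, |(P h s a s' - P' h s a s') * Vval H P' r π (h + 1) s'| :=
                Finset.abs_sum_le_sum_abs _ _
            _ ≤ ∑ s' : S, |P h s a s' - P' h s a s'| * ((H - h : ℕ) : ℝ) := by
                apply Finset.sum_le_sum
                intro s' _
                rw [abs_mul]
                apply mul_le_mul_of_nonneg_left _ (abs_nonneg _)
                rw [abs_of_nonneg (Vval_nonneg H P' r π hP' hr (H + 1 - (h+1)) (h+1) s' rfl)]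
                have := Vval_le H P' r π hP' hr (H + 1 - (h+1)) (h+1) s' rfl
                have heq : H + 1 - (h + 1) = H - h := by omega
                rwa [heq] at this
            _ = (∑ s' : S, |P h s a s' - P' h s a s'|) * ((H - h : ℕ) : ℝ) := by
                rw [Finset.sum_mul]
            _ ≤ ε * ((H - h : ℕ) : ℝ) := by
                apply mul_le_mul_of_nonneg_right (hε h hh1 hle s a) (by positivity)
            _ = ((H - h : ℕ) : ℝ) * ε := by ring
        have hcast : ((H + 1 - h : ℕ) : ℝ) = ((H - h : ℕ) : ℝ) + 1 := by
          have : H + 1 - h = (H - h) + 1 := by omega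
          rw [this]; push_cast; ring
        have habs := abs_add_le
          (∑ s' : S, P h s a s' * (Vval H P r π (h + 1) s' - Vval H P' r π (h + 1) s'))
          (∑ s' : S, (P h s a s' - P' h s a s') * Vval H P' r π (h + 1) s')
        rw [hcast]
        have hx : 0 ≤ ((H - h : ℕ) : ℝ) := by positivity
        nlinarith [habs, b1, b2]
      · rw [Vval, Vval]
        simp [hle]
        positivity
  have := key H 1 (by omega) le_rfl s
  have heq : H + 1 - 1 = H := by omega
  rw [heq] at this
  calc |Vval H P r π 1 s - Vval H P' r π 1 s| ≤ ε * ((H : ℕ) : ℝ)^2 / 2 := this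
    _ = ((H : ℝ)^2 / 2) * ε := by ring
end

section
/- Fix an integer A ≥ 2 and Δ ∈ (0, 1/4]. On a probability space, let (X_{a,t})_{a ∈ {1,…,A}, t ∈ ℕ} be independent {0,1}-valued random variables with P(X_{1,t} = 1) = 1/2 + Δ and P(X_{a,t} = 1) = 1/2 for every a ≥ 2 and t. Consider any pure-exploitation greedy algorithm with warm-start L = 1: it pulls a_t := t for t ∈ {1, …, A}, and for every t > A the pull a_t is measurable with respect to the history σ((a_s, X_{a_s,s})_{s < t}) and satisfies μ̂_{a_t}(t) = max_{a} μ̂_a(t), where μ̂_a(t) := (∑_{s < t, a_s = a} X_{a,s}) / #{s < t : a_s = a} is the empirical mean from the algorithm's own pulls. Define the regret Regret(T) := ∑_{t=1}^{T} (μ_1 − μ_{a_t}) with μ_1 = 1/2 + Δ and μ_a = 1/2 for a ≥ 2. Then for every T ≥ A, E[Regret(T)] ≥ (1/2 − Δ)(1 − 2^{−(A−1)}) Δ (T − A). -/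
open MeasureTheory ProbabilityTheory Finset

/-!
Greedy is trapped by an unlucky warm start: with probability `(1/2 - Δ)(1 - 2^{-(A-1)})` the
optimal arm's single warm-start sample is `0` while some other arm's sample is `1`. Rewards are
nonnegative, so from then on the optimal arm's empirical mean stays `0` while that other arm's
stays positive; greedy never pulls the optimal arm again, and each of the `T - A` later rounds
costs `Δ`.
-/

section Greedy

variable {α : Type*} [DecidableEq α] {a : ℕ → α} {x : α × ℕ → ℝ}

def pulls (a : ℕ → α) (t : ℕ) (i : α) : Finset ℕ :=
  (Ico 1 t).filter (fun s => a s = i)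

-- An arm not yet pulled has empirical mean `0 / 0 = 0`.
noncomputable def empiricalMean (a : ℕ → α) (x : α × ℕ → ℝ) (t : ℕ) (i : α) : ℝ :=
  (∑ s ∈ pulls a t i, x (i, s)) / (pulls a t i).card

lemma pulls_mono {t t' : ℕ} (h : t ≤ t') (i : α) : pulls a t i ⊆ pulls a t' i :=
  filter_subset_filter _ (Ico_subset_Ico_right h)

lemma pulls_eq_of_forall_ne {i : α} {t₀ t : ℕ} (ht : t₀ ≤ t)
    (hne : ∀ s, t₀ ≤ s → s < t → a s ≠ i) : pulls a t i = pulls a t₀ i := by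
  ext s
  simp only [pulls, mem_filter, mem_Ico]
  constructor
  · rintro ⟨⟨hs1, hst⟩, hs⟩
    exact ⟨⟨hs1, not_le.1 fun h => hne s h hst hs⟩, hs⟩
  · rintro ⟨⟨hs1, hs⟩, h⟩
    exact ⟨⟨hs1, by omega⟩, h⟩

lemma empiricalMean_pos {t s : ℕ} {i : α} (hx : ∀ s, 0 ≤ x (i, s)) (hs : s ∈ pulls a t i)
    (hpos : 0 < x (i, s)) : 0 < empiricalMean a x t i :=
  div_pos (sum_pos' (fun s _ => hx s) ⟨s, hs, hpos⟩) (Nat.cast_pos.2 (card_pos.2 ⟨s, hs⟩))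

theorem greedy_ne_of_sum_pulls_eq_zero [Finite α] {t₀ s : ℕ} {i b : α}
    (hgreedy : ∀ t, t₀ ≤ t → empiricalMean a x t (a t) = ⨆ j, empiricalMean a x t j)
    (hx : ∀ p, 0 ≤ x p) (hi : ∑ s ∈ pulls a t₀ i, x (i, s) = 0)
    (hb : s ∈ pulls a t₀ b) (hpos : 0 < x (b, s)) :
    ∀ t, t₀ ≤ t → a t ≠ i := by
  intro t
  induction t using Nat.strong_induction_on with
  | _ t ih =>
    intro ht hti
    have hpulls : pulls a t i = pulls a t₀ i :=
      pulls_eq_of_forall_ne ht fun s hs hst => ih s hst hs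
    have hmean_i : empiricalMean a x t i = 0 := by
      rw [empiricalMean, hpulls, hi, zero_div]
    have hmean_b : 0 < empiricalMean a x t b :=
      empiricalMean_pos (fun _ => hx _) (pulls_mono ht b hb) hpos
    have hle := le_ciSup (Finite.bddAbove_range (empiricalMean a x t)) b
    rw [← hgreedy t ht, hti, hmean_i] at hle
    linarith

lemma pulls_of_warmStart {A : ℕ} {a : ℕ → Fin A}
    (hwarm : ∀ t, 1 ≤ t → t ≤ A → (a t : ℕ) = t - 1) (i : Fin A) :
    pulls a (A + 1) i = {(i : ℕ) + 1} := by
  ext s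
  simp only [pulls, mem_filter, mem_Ico, mem_singleton]
  constructor
  · rintro ⟨⟨hs1, hsA⟩, rfl⟩
    have := hwarm s hs1 (by omega)
    omega
  · rintro rfl
    refine ⟨⟨by omega, by omega⟩, Fin.ext ?_⟩
    rw [hwarm _ (by omega) (by omega)]
    rfl

theorem greedy_ne_of_warmStart_eq_zero {A : ℕ} (hA : 0 < A) {a : ℕ → Fin A}
    {x : Fin A × ℕ → ℝ} (hwarm : ∀ t, 1 ≤ t → t ≤ A → (a t : ℕ) = t - 1)
    (hgreedy : ∀ t, A < t → empiricalMean a x t (a t) = ⨆ j, empiricalMean a x t j)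
    (hx : ∀ p, 0 ≤ x p) (h0 : x (⟨0, hA⟩, 1) = 0) {b : Fin A}
    (hb : 0 < x (b, (b : ℕ) + 1)) :
    ∀ t, A < t → a t ≠ ⟨0, hA⟩ :=
  greedy_ne_of_sum_pulls_eq_zero (t₀ := A + 1) hgreedy hx
    (by rw [pulls_of_warmStart hwarm, sum_singleton]; exact h0)
    (by rw [pulls_of_warmStart hwarm]; exact mem_singleton_self _) hb

end Greedy

section Measurability

variable {Ω α β : Type*} [MeasurableSpace Ω] [MeasurableSpace α] [MeasurableSpace β]
  [Countable α] [MeasurableSingletonClass α]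

lemma measurable_apply_select {f : α → Ω → β} (hf : ∀ i, Measurable (f i)) {g : Ω → α}
    (hg : Measurable g) : Measurable fun ω => f (g ω) ω :=
  (measurable_from_prod_countable_right (f := fun p : α × Ω => f p.1 p.2) hf).comp
    (hg.prodMk measurable_id)

lemma measurable_of_measurable_history {X : α × ℕ → Ω → β} (hX : ∀ p, Measurable (X p))
    {a : ℕ → Ω → α} {t₀ : ℕ}
    (hwarm : ∀ t, 1 ≤ t → t ≤ t₀ → Measurable (a t))
    (hhist : ∀ t, t₀ < t →
      Measurable[⨆ s ∈ Ico 1 t, MeasurableSpace.comap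
        (fun ω => (a s ω, X (a s ω, s) ω)) inferInstance] (a t)) :
    ∀ t, 1 ≤ t → Measurable (a t) := by
  intro t
  induction t using Nat.strong_induction_on with
  | _ t ih =>
    intro ht
    rcases le_or_gt t t₀ with htt₀ | htt₀
    · exact hwarm t ht htt₀
    · refine (hhist t htt₀).mono (iSup₂_le fun s hs => ?_) le_rfl
      rw [mem_Ico] at hs
      have has := ih s hs.2 hs.1
      exact (has.prodMk (measurable_apply_select (fun i => hX (i, s)) has)).comap_le

end Measurability

section Probability

variable {Ω : Type*} [MeasurableSpace Ω] {μ : Measure Ω}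

lemma ProbabilityTheory.iIndepFun.measureReal_biInter_preimage {ι β : Type*} [MeasurableSpace β]
    {X : ι → Ω → β} (h : iIndepFun X μ) (S : Finset ι) {B : ι → Set β}
    (hB : ∀ i, MeasurableSet (B i)) :
    μ.real (⋂ i ∈ S, X i ⁻¹' B i) = ∏ i ∈ S, μ.real (X i ⁻¹' B i) := by
  simp only [measureReal_def, h.measure_inter_preimage_eq_mul S (fun i _ => hB i),
    ENNReal.toReal_prod]

lemma ProbabilityTheory.iIndepFun.measureReal_preimage_sdiff_biInter [IsFiniteMeasure μ]
    {ι β : Type*} [MeasurableSpace β] {X : ι → Ω → β} (h : iIndepFun X μ)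
    (hX : ∀ i, Measurable (X i))
    {i : ι} {S : Finset ι} (hi : i ∉ S) {B : ι → Set β} (hB : ∀ i, MeasurableSet (B i)) :
    μ.real (X i ⁻¹' B i \ ⋂ j ∈ S, X j ⁻¹' B j)
      = μ.real (X i ⁻¹' B i) * (1 - ∏ j ∈ S, μ.real (X j ⁻¹' B j)) := by
  classical
  have hsplit := measureReal_inter_add_sdiff (μ := μ) (s := X i ⁻¹' B i)
    (measurableSet_biInter S fun j _ => hX j (hB j))
  rw [← set_biInter_insert i S fun j => X j ⁻¹' B j, h.measureReal_biInter_preimage _ hB,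
    prod_insert hi] at hsplit
  linear_combination hsplit

lemma ProbabilityTheory.iIndepFun.measureReal_preimage_sdiff_biInter_erase
    [IsFiniteMeasure μ] {ι β : Type*} [Fintype ι] [DecidableEq ι] [MeasurableSpace β]
    {X : ι × ℕ → Ω → β} (h : iIndepFun X μ) (hX : ∀ p, Measurable (X p)) {B : Set β}
    (hB : MeasurableSet B) (z : ι) (τ : ι → ℕ) {p q : ℝ}
    (hz : μ.real (X (z, τ z) ⁻¹' B) = p)
    (hb : ∀ b ≠ z, μ.real (X (b, τ b) ⁻¹' B) = q) :
    μ.real (X (z, τ z) ⁻¹' B \ ⋂ b ∈ univ.erase z, X (b, τ b) ⁻¹' B)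
      = p * (1 - q ^ (Fintype.card ι - 1)) := by
  have hinj : Set.InjOn (fun b => (b, τ b)) (univ.erase z : Set ι) :=
    fun _ _ _ _ h => congrArg Prod.fst h
  have hzS : (z, τ z) ∉ (univ.erase z).image fun b => (b, τ b) := by
    simp only [mem_image, mem_erase]
    rintro ⟨b, ⟨hbz, -⟩, hb⟩
    exact hbz (congrArg Prod.fst hb)
  have hS : ⋂ b ∈ univ.erase z, X (b, τ b) ⁻¹' B
      = ⋂ p ∈ (univ.erase z).image fun b => (b, τ b), X p ⁻¹' B :=
    (set_biInter_finset_image (g := fun p => X p ⁻¹' B)).symm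
  rw [hS, h.measureReal_preimage_sdiff_biInter hX hzS fun _ => hB,
    prod_image hinj, prod_congr rfl fun b hb' => hb b (ne_of_mem_erase hb'), prod_const,
    card_erase_of_mem (mem_univ z), card_univ, hz]

lemma measureReal_preimage_zero_of_zero_or_one [IsProbabilityMeasure μ] {f : Ω → ℝ}
    (hf : Measurable f) (h01 : ∀ ω, f ω = 0 ∨ f ω = 1) {r : ℝ} (hr : 0 ≤ r)
    (h1 : μ {ω | f ω = 1} = ENNReal.ofReal r) :
    μ.real (f ⁻¹' {0}) = 1 - r := by
  have hcompl : f ⁻¹' {0} = {ω | f ω = 1}ᶜ := by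
    ext ω
    rcases h01 ω with h | h <;> simp [h]
  rw [hcompl, probReal_compl_eq_one_sub (s := {ω | f ω = 1}) (hf (measurableSet_singleton 1)),
    measureReal_def, h1, ENNReal.toReal_ofReal hr]

lemma le_integral_sum_indicator [IsFiniteMeasure μ] {G : ℕ → Set Ω} {E : Set Ω}
    {t₀ T : ℕ} (hG : ∀ t ∈ Icc 1 T, MeasurableSet (G t))
    (hE : ∀ t ∈ Ioc t₀ T, E ⊆ G t) {c : ℝ} (hc : 0 ≤ c) :
    ((T : ℝ) - t₀) * c * μ.real E
      ≤ ∫ ω, ∑ t ∈ Icc 1 T, (G t).indicator (fun _ => c) ω ∂μ := by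
  have hcard : (T : ℝ) - t₀ ≤ (Ioc t₀ T).card := by
    rw [Nat.card_Ioc]
    rcases le_total t₀ T with h | h
    · rw [Nat.cast_sub h]
    · rw [Nat.sub_eq_zero_of_le h, Nat.cast_zero]
      exact sub_nonpos.2 (Nat.cast_le.2 h)
  rw [integral_finsetSum _ fun t ht => (integrable_const c).indicator (hG t ht)]
  calc ((T : ℝ) - t₀) * c * μ.real E
      ≤ (Ioc t₀ T).card * (μ.real E * c) := by
        rw [mul_assoc, mul_comm c]
        exact mul_le_mul_of_nonneg_right hcard (by positivity)
    _ = ∑ t ∈ Ioc t₀ T, μ.real E * c := by rw [sum_const, nsmul_eq_mul]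
    _ ≤ ∑ t ∈ Ioc t₀ T, μ.real (G t) * c :=
        sum_le_sum fun t ht => mul_le_mul_of_nonneg_right (measureReal_mono (hE t ht)) hc
    _ ≤ ∑ t ∈ Icc 1 T, μ.real (G t) * c :=
        sum_le_sum_of_subset_of_nonneg
          (fun t ht => by simp only [mem_Ioc, mem_Icc] at ht ⊢; omega) fun t _ _ => by positivity
    _ = ∑ t ∈ Icc 1 T, ∫ ω, (G t).indicator (fun _ => c) ω ∂μ :=
        sum_congr rfl fun t ht => by rw [integral_indicator_const c (hG t ht), smul_eq_mul]

end Probability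

/-- **Linear regret of pure-exploitation greedy with warm-start `L = 1`.**
Arms are indexed by `Fin A` with arm `⟨0,_⟩` the optimal arm (Bernoulli mean
`1/2 + Δ`) and all other arms having mean `1/2`, all samples independent.
The algorithm pulls each arm once during rounds `1, …, A`, and afterwards
always pulls an arm with maximal empirical mean (measurably in the history).
Then for every `T ≥ A`, the expected regret is at least
`(1/2 − Δ)(1 − 2^{−(A−1)}) Δ (T − A)`. -/
theorem peg_linear_regret_warmstart_one
    {Ω : Type*} [MeasurableSpace Ω] (μ : Measure Ω) [IsProbabilityMeasure μ]
    (A : ℕ) (hA : 2 ≤ A)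
    (Δ : ℝ) (hΔ0 : 0 < Δ)
    (X : Fin A × ℕ → Ω → ℝ)
    (hXmeas : ∀ p, Measurable (X p))
    (hX01 : ∀ p ω, X p ω = 0 ∨ X p ω = 1)
    (hindep : iIndepFun X μ)
    (hmean1 : ∀ t, μ {ω | X (⟨0, by omega⟩, t) ω = 1} = ENNReal.ofReal (1 / 2 + Δ))
    (hmean2 : ∀ a : Fin A, a ≠ ⟨0, by omega⟩ →
      ∀ t, μ {ω | X (a, t) ω = 1} = ENNReal.ofReal (1 / 2))
    (aSel : ℕ → Ω → Fin A)
    (hwarm : ∀ t, ∀ _h1 : 1 ≤ t, ∀ _h2 : t ≤ A, ∀ ω, aSel t ω = ⟨t - 1, by omega⟩)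
    (hhist : ∀ t, A < t →
      Measurable[⨆ s ∈ Finset.Ico 1 t, MeasurableSpace.comap
        (fun ω => (aSel s ω, X (aSel s ω, s) ω)) inferInstance] (aSel t))
    (hgreedy : ∀ t, A < t → ∀ ω,
      (∑ s ∈ (Finset.Ico 1 t).filter (fun s => aSel s ω = aSel t ω),
            X (aSel t ω, s) ω)
          / ((Finset.Ico 1 t).filter (fun s => aSel s ω = aSel t ω)).card
        = ⨆ a : Fin A,
            (∑ s ∈ (Finset.Ico 1 t).filter (fun s => aSel s ω = a), X (a, s) ω)
              / ((Finset.Ico 1 t).filter (fun s => aSel s ω = a)).card)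
    (T : ℕ) :
    (1 / 2 - Δ) * (1 - (1 / 2 : ℝ) ^ (A - 1)) * Δ * ((T : ℝ) - A)
      ≤ ∫ ω, (∑ t ∈ Finset.Icc 1 T,
          ((1 / 2 + Δ)
            - (if aSel t ω = (⟨0, by omega⟩ : Fin A) then 1 / 2 + Δ else 1 / 2))) ∂μ := by
  set z : Fin A := ⟨0, by omega⟩
  have haSel := measurable_of_measurable_history hXmeas
    (fun t h1 h2 => by rw [funext (hwarm t h1 h2)]; exact measurable_const) hhist
  set E := X (z, 1) ⁻¹' {0} \ ⋂ b ∈ univ.erase z, X (b, (b : ℕ) + 1) ⁻¹' {0}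
  have hE : μ.real E = (1 / 2 - Δ) * (1 - (1 / 2 : ℝ) ^ (A - 1)) := by
    have := hindep.measureReal_preimage_sdiff_biInter_erase hXmeas (measurableSet_singleton 0) z
      (fun b => (b : ℕ) + 1)
      (measureReal_preimage_zero_of_zero_or_one (hXmeas _) (hX01 _) (by positivity) (hmean1 1))
      fun b hb => measureReal_preimage_zero_of_zero_or_one (hXmeas _) (hX01 _) (by norm_num)
        (hmean2 b hb _)
    rw [Fintype.card_fin] at this
    linear_combination this
  have hEsub : ∀ t ∈ Ioc A T, E ⊆ {ω | aSel t ω ≠ z} := by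
    rintro t ht ω ⟨hz, hb⟩
    obtain ⟨b, -, hb⟩ : ∃ b ∈ univ.erase z, X (b, (b : ℕ) + 1) ω ≠ 0 := by
      simpa using hb
    exact greedy_ne_of_warmStart_eq_zero (x := (X · ω)) _
      (fun t h1 h2 => congrArg Fin.val (hwarm t h1 h2 ω))
      (fun t ht => hgreedy t ht ω) (fun p => (hX01 p ω).elim (·.ge) (·.ge.trans' zero_le_one))
      hz (((hX01 _ ω).resolve_left hb).symm ▸ one_pos) t (mem_Ioc.1 ht).1
  have hregret : ∀ t ω, (1 / 2 + Δ) - (if aSel t ω = z then 1 / 2 + Δ else 1 / 2)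
      = {ω | aSel t ω ≠ z}.indicator (fun _ => Δ) ω := by
    intro t ω
    by_cases h : aSel t ω = z <;> simp [h]
  simp only [hregret]
  calc _ = ((T : ℝ) - A) * Δ * μ.real E := by rw [hE]; ring
    _ ≤ _ := le_integral_sum_indicator
      (fun t ht => (haSel t (mem_Icc.1 ht).1 (measurableSet_singleton z)).compl) hEsub hΔ0.le
end

section
/- Fix integers A ≥ 2, L ≥ 1, and Δ ∈ (0, 1/4]. On a probability space, let (X_{a,t})_{a ∈ {1,…,A}, t ∈ ℕ} be independent {0,1}-valued random variables with P(X_{1,t} = 1) = 1/2 + Δ and P(X_{a,t} = 1) = 1/2 for every a ≥ 2 and t. Consider any pure-exploitation greedy algorithm with warm-start of length AL: the pulls a_t for t ∈ {1, …, AL} are deterministic and pull each arm exactly L times, and for every t > AL the pull a_t is measurable with respect to the history σ((a_s, X_{a_s,s})_{s < t}) and satisfies μ̂_{a_t}(t) = max_{a} μ̂_a(t), where μ̂_a(t) := (∑_{s < t, a_s = a} X_{a,s}) / #{s < t : a_s = a}. Define Regret(T) := ∑_{t=1}^{T} (μ_1 − μ_{a_t}) with μ_1 = 1/2 + Δ and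 μ_a = 1/2 for a ≥ 2. Then for every T ≥ AL, E[Regret(T)] ≥ (1/2 − Δ)^L (1 − (1 − 2^{−L})^{A−1}) Δ (T − AL). -/
open MeasureTheory ProbabilityTheory Finset

/-!
Let `B` be the event that the warm start shows only zeros for the optimal arm and only ones for
some other arm `j`. On `B` the optimal arm is never pulled again: by induction, all its pulls
are warm-start pulls, so its empirical mean stays `0`, while the empirical mean of `j` stays
positive. Hence on `B` every round after the warm start costs `Δ`. The warm-start rewards of
distinct arms are independent, so `P(B) = (1/2 - Δ)^L (1 - (1 - 2^{-L})^{A-1})`, and the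
regret, being nonnegative, has expectation at least `Δ (T - A L) P(B)`.
-/

theorem ProbabilityTheory.iIndep.measure_biInter_eq_prod_of_measurableSet_fiber
    {Ω ι κ : Type*} {mΩ : MeasurableSpace Ω} {μ : Measure Ω} [IsProbabilityMeasure μ]
    {m : ι → MeasurableSpace Ω} (hle : ∀ i, m i ≤ mΩ) (hind : iIndep m μ) (f : ι → κ)
    {G : κ → Set Ω} (hG : ∀ k, MeasurableSet[⨆ i ∈ f ⁻¹' {k}, m i] (G k)) (s : Finset κ) :
    μ (⋂ k ∈ s, G k) = ∏ k ∈ s, μ (G k) := by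
  classical
  induction s using Finset.induction_on with
  | empty => simp
  | insert k s hk ih =>
    have hdisj : Disjoint (f ⁻¹' {k}) (f ⁻¹' s) :=
      Set.disjoint_left.2 fun i (hi : f i = k) (hi' : f i ∈ s) => hk (hi ▸ hi')
    have hmeas : MeasurableSet[⨆ i ∈ f ⁻¹' s, m i] (⋂ k' ∈ s, G k') := by
      refine Finset.measurableSet_biInter _ fun k' hk' => ?_
      have hfiber : (⨆ i ∈ f ⁻¹' {k'}, m i) ≤ ⨆ i ∈ f ⁻¹' s, m i :=
        biSup_mono fun i (hi : f i = k') => (hi ▸ hk' : f i ∈ s)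
      exact hfiber _ (hG k')
    rw [Finset.set_biInter_insert, Finset.prod_insert hk, ← ih]
    exact (Indep_iff _ _ _).1 (indep_iSup_of_disjoint hle hind hdisj) _ _ (hG k) hmeas

namespace Bandit

section Greedy

variable {α : Type*} [DecidableEq α]

/-- Rounds are numbered from `1`; an arm not yet pulled has empirical mean `0`. -/
noncomputable def empiricalMean (sel : ℕ → α) (x : α × ℕ → ℝ) (t : ℕ) (a : α) : ℝ :=
  (∑ s ∈ (Ico 1 t).filter (fun s => sel s = a), x (a, s)) /
    ((Ico 1 t).filter (fun s => sel s = a)).card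

variable {sel : ℕ → α} {x : α × ℕ → ℝ} {t : ℕ} {a : α}

theorem empiricalMean_eq_zero (h : ∀ s ∈ Ico 1 t, sel s = a → x (a, s) = 0) :
    empiricalMean sel x t a = 0 := by
  rw [empiricalMean, sum_eq_zero fun s hs => h s (mem_filter.1 hs).1 (mem_filter.1 hs).2,
    zero_div]

theorem empiricalMean_pos (hx : ∀ s, 0 ≤ x (a, s)) {s₀ : ℕ} (hs₀ : s₀ ∈ Ico 1 t)
    (hsel : sel s₀ = a) (hpos : 0 < x (a, s₀)) : 0 < empiricalMean sel x t a := by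
  have hmem : s₀ ∈ (Ico 1 t).filter (fun s => sel s = a) := mem_filter.2 ⟨hs₀, hsel⟩
  exact div_pos (hpos.trans_le (single_le_sum (fun s _ => hx s) hmem))
    (Nat.cast_pos.2 (card_pos.2 ⟨s₀, hmem⟩))

theorem greedy_ne_of_warmStart [Finite α] {w : ℕ → α} {N : ℕ}
    (hwarm : ∀ t, 1 ≤ t → t ≤ N → sel t = w t)
    (hgreedy : ∀ t, N < t → empiricalMean sel x t (sel t) = ⨆ a, empiricalMean sel x t a)
    {a₀ j : α} (hx : ∀ s, 0 ≤ x (j, s)) (hzero : ∀ s, 1 ≤ s → s ≤ N → w s = a₀ → x (a₀, s) = 0)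
    {s₀ : ℕ} (hs₀ : 1 ≤ s₀) (hs₀N : s₀ ≤ N) (hw : w s₀ = j) (hpos : 0 < x (j, s₀)) :
    ∀ t, N < t → sel t ≠ a₀ := by
  intro t
  induction t using Nat.strong_induction_on with
  | _ t ih =>
    intro ht hsel
    have hmean₀ : empiricalMean sel x t a₀ = 0 := empiricalMean_eq_zero fun s hs hsa => by
      obtain ⟨h1, hst⟩ := mem_Ico.1 hs
      have hsN : s ≤ N := not_lt.1 fun hNs => ih s hst hNs hsa
      exact hzero s h1 hsN (hwarm s h1 hsN ▸ hsa)
    have hmeanj : 0 < empiricalMean sel x t j :=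
      empiricalMean_pos hx (mem_Ico.2 ⟨hs₀, by omega⟩) (by rw [hwarm s₀ hs₀ hs₀N, hw]) hpos
    have hle := le_ciSup (Finite.bddAbove_range fun a => empiricalMean sel x t a) j
    rw [← hgreedy t ht, hsel, hmean₀] at hle
    linarith

end Greedy

section Selection

variable {Ω α : Type*} {mΩ : MeasurableSpace Ω} [MeasurableSpace α] [Countable α]
  [MeasurableSingletonClass α]

theorem measurable_reward_of_measurable_arm {X : α × ℕ → Ω → ℝ} (hX : ∀ p, Measurable (X p))
    {g : Ω → α} (hg : Measurable g) (s : ℕ) : Measurable fun ω => X (g ω, s) ω :=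
  (measurable_from_prod_countable_right (f := fun q : α × Ω => X (q.1, s) q.2)
    fun a => hX (a, s)).comp (hg.prodMk measurable_id)

theorem measurable_selection_of_history {sel : ℕ → Ω → α} {X : α × ℕ → Ω → ℝ}
    (hX : ∀ p, Measurable (X p)) {w : ℕ → α} {N : ℕ}
    (hwarm : ∀ t, 1 ≤ t → t ≤ N → ∀ ω, sel t ω = w t)
    (hhist : ∀ t, N < t → Measurable[⨆ s ∈ Ico 1 t, MeasurableSpace.comap
        (fun ω => (sel s ω, X (sel s ω, s) ω)) inferInstance] (sel t)) :
    ∀ t, 1 ≤ t → Measurable (sel t) := by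
  intro t
  induction t using Nat.strong_induction_on with
  | _ t ih =>
    intro ht
    rcases le_or_gt t N with htN | hNt
    · rw [show sel t = fun _ => w t from funext (hwarm t ht htN)]
      exact measurable_const
    · refine (hhist t hNt).mono (iSup₂_le fun s hs => ?_) le_rfl
      obtain ⟨hs1, hst⟩ := mem_Ico.1 hs
      have hsel := ih s hst hs1
      exact (hsel.prodMk (measurable_reward_of_measurable_arm hX hsel s)).comap_le

end Selection

section WarmStartEvent

variable {Ω α : Type*} {mΩ : MeasurableSpace Ω} {μ : Measure Ω}
  {X : α × ℕ → Ω → ℝ} {S : α → Finset ℕ}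

def allRewardsEq (X : α × ℕ → Ω → ℝ) (S : α → Finset ℕ) (a : α) (v : ℝ) : Set Ω :=
  ⋂ s ∈ S a, {ω | X (a, s) ω = v}

theorem measurableSet_allRewardsEq_fiber (a : α) (v : ℝ) :
    MeasurableSet[⨆ p ∈ Prod.fst ⁻¹' {a}, MeasurableSpace.comap (X p) inferInstance]
      (allRewardsEq X S a v) :=
  Finset.measurableSet_biInter _ fun s _ =>
    le_iSup₂ (f := fun p (_ : p ∈ Prod.fst ⁻¹' {a}) => MeasurableSpace.comap (X p) inferInstance)
      (a, s) rfl _ ⟨{v}, measurableSet_singleton v, rfl⟩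

theorem measurableSet_allRewardsEq (hX : ∀ p, Measurable (X p)) (a : α) (v : ℝ) :
    MeasurableSet (allRewardsEq X S a v) :=
  Finset.measurableSet_biInter _ fun s _ => hX (a, s) (measurableSet_singleton v)

theorem measureReal_allRewardsEq (hind : iIndepFun X μ) {a : α} {v r : ℝ}
    (hr : ∀ s, μ.real {ω | X (a, s) ω = v} = r) :
    μ.real (allRewardsEq X S a v) = r ^ #(S a) := by
  classical
  have h := hind.meas_biInter (S := (S a).image (a, ·)) (s := fun p => {ω | X p ω = v})
    fun p _ => ⟨{v}, measurableSet_singleton v, rfl⟩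
  rw [set_biInter_finset_image, prod_image fun _ _ _ _ hst => (Prod.ext_iff.1 hst).2] at h
  rw [allRewardsEq, measureReal_def, h, ENNReal.toReal_prod]
  simp only [← measureReal_def, hr, prod_const]

theorem measureReal_allRewardsEq_inter_iUnion [IsProbabilityMeasure μ] [Fintype α]
    [DecidableEq α] (hX : ∀ p, Measurable (X p)) (h01 : ∀ p ω, X p ω = 0 ∨ X p ω = 1)
    (hind : iIndepFun X μ) {a₀ : α} {p q : ℝ} (hp : ∀ t, μ.real {ω | X (a₀, t) ω = 1} = p)
    (hq : ∀ a ≠ a₀, ∀ t, μ.real {ω | X (a, t) ω = 1} = q) {L : ℕ} (hS : ∀ a, #(S a) = L) :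
    μ.real (allRewardsEq X S a₀ 0 ∩ ⋃ j ∈ univ.erase a₀, allRewardsEq X S j 1)
      = (1 - p) ^ L * (1 - (1 - q ^ L) ^ (Fintype.card α - 1)) := by
  set E := allRewardsEq X S a₀ 0
  set F := fun j => allRewardsEq X S j 1
  have hE : μ.real E = (1 - p) ^ L := by
    rw [← hS a₀]
    refine measureReal_allRewardsEq hind fun t => ?_
    have hzero : {ω | X (a₀, t) ω = 0} = {ω | X (a₀, t) ω = 1}ᶜ := by
      ext ω
      rcases h01 (a₀, t) ω with h | h <;> simp [h]
    have hone : MeasurableSet {ω | X (a₀, t) ω = 1} := hX _ (measurableSet_singleton 1)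
    rw [hzero, probReal_compl_eq_one_sub hone, hp]
  have hFc : ∀ j ∈ univ.erase a₀, μ.real (F j)ᶜ = 1 - q ^ L := fun j hj => by
    rw [probReal_compl_eq_one_sub (measurableSet_allRewardsEq hX j 1), ← hS j,
      measureReal_allRewardsEq hind (hq j (ne_of_mem_erase hj))]
  have hindep : μ.real (E ∩ ⋂ j ∈ univ.erase a₀, (F j)ᶜ)
      = μ.real E * ∏ j ∈ univ.erase a₀, μ.real (F j)ᶜ := by
    let G : α → Set Ω := fun a => if a = a₀ then E else (F a)ᶜ
    have hG : ∀ j ∈ univ.erase a₀, G j = (F j)ᶜ := fun j hj => if_neg (ne_of_mem_erase hj)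
    have h := hind.iIndep.measure_biInter_eq_prod_of_measurableSet_fiber
      (fun p => (hX p).comap_le) Prod.fst (G := G) (fun a => by
        by_cases ha : a = a₀
        · rw [show G a = E from if_pos ha, ha]
          exact measurableSet_allRewardsEq_fiber a₀ 0
        · rw [show G a = (F a)ᶜ from if_neg ha]
          exact (measurableSet_allRewardsEq_fiber a 1).compl) univ
    rw [← insert_erase (mem_univ a₀), set_biInter_insert, prod_insert (notMem_erase a₀ _),
      Set.iInter₂_congr hG, prod_congr rfl fun j hj => congrArg μ (hG j hj),
      show G a₀ = E from if_pos rfl] at h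
    simp only [measureReal_def, h, ENNReal.toReal_mul, ENNReal.toReal_prod]
  have hB : E ∩ ⋃ j ∈ univ.erase a₀, F j = E \ (E ∩ ⋂ j ∈ univ.erase a₀, (F j)ᶜ) := by
    rw [Set.sdiff_self_inter, Set.sdiff_eq, Set.compl_iInter₂]
    simp only [compl_compl]
  rw [hB, measureReal_sdiff Set.inter_subset_left ((measurableSet_allRewardsEq hX a₀ 0).inter
      (Finset.measurableSet_biInter _ fun j _ => (measurableSet_allRewardsEq hX j 1).compl)),
    hindep, prod_congr rfl hFc, prod_const, card_erase_of_mem (mem_univ a₀), card_univ, hE]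
  ring

end WarmStartEvent

section Regret

variable {α : Type*} [DecidableEq α] {a₀ : α} {m₀ m : ℝ} {T : ℕ}

def regret (sel : ℕ → α) (a₀ : α) (m₀ m : ℝ) (T : ℕ) : ℝ :=
  ∑ t ∈ Icc 1 T, (m₀ - if sel t = a₀ then m₀ else m)

theorem regret_nonneg (sel : ℕ → α) (hm : m ≤ m₀) : 0 ≤ regret sel a₀ m₀ m T :=
  sum_nonneg fun t _ => by split_ifs <;> linarith

theorem mul_sub_le_regret {sel : ℕ → α} (hm : m ≤ m₀) {N : ℕ} (hNT : N ≤ T)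
    (h : ∀ t, N < t → sel t ≠ a₀) : (m₀ - m) * ((T : ℝ) - N) ≤ regret sel a₀ m₀ m T :=
  calc (m₀ - m) * ((T : ℝ) - N) = ∑ t ∈ Ioc N T, (m₀ - m) := by
        rw [sum_const, Nat.card_Ioc, nsmul_eq_mul, Nat.cast_sub hNT]; ring
    _ = ∑ t ∈ Ioc N T, (m₀ - if sel t = a₀ then m₀ else m) :=
        sum_congr rfl fun t ht => by rw [if_neg (h t (mem_Ioc.1 ht).1)]
    _ ≤ regret sel a₀ m₀ m T :=
        sum_le_sum_of_subset_of_nonneg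
          (fun t ht => by simp only [mem_Ioc, mem_Icc] at ht ⊢; omega)
          fun t _ _ => by split_ifs <;> linarith

theorem integrable_regret {Ω : Type*} {mΩ : MeasurableSpace Ω} {μ : Measure Ω}
    [IsFiniteMeasure μ] [MeasurableSpace α] [Finite α] [MeasurableSingletonClass α]
    {sel : ℕ → Ω → α} (hsel : ∀ t, 1 ≤ t → Measurable (sel t)) :
    Integrable (fun ω => regret (sel · ω) a₀ m₀ m T) μ :=
  integrable_finsetSum _ fun t ht => (integrable_const m₀).sub <|
    (Integrable.of_finite (μ := μ.map (sel t))
      (f := fun a => if a = a₀ then m₀ else m)).comp_measurable (hsel t (mem_Icc.1 ht).1)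

end Regret

end Bandit

/-- **Linear regret of pure-exploitation greedy with warm-start length `L`.**
Arms are indexed by `Fin A` with arm `⟨0,_⟩` the optimal arm (Bernoulli mean
`1/2 + Δ`) and all other arms having mean `1/2`, all samples independent.
During rounds `1, …, A·L` the pulls are deterministic (given by `w`) and pull
each arm exactly `L` times; afterwards the algorithm always pulls an arm with
maximal empirical mean (measurably in the history). Then for every
`T ≥ A·L`, the expected regret is at least
`(1/2 − Δ)^L (1 − (1 − 2^{−L})^{A−1}) Δ (T − A·L)`. -/
theorem peg_linear_regret_warmstart_L
    {Ω : Type*} [MeasurableSpace Ω] (μ : Measure Ω) [IsProbabilityMeasure μ]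
    (A : ℕ) (hA : 2 ≤ A) (L : ℕ) (hL : 1 ≤ L)
    (Δ : ℝ) (hΔ0 : 0 < Δ)
    (X : Fin A × ℕ → Ω → ℝ)
    (hXmeas : ∀ p, Measurable (X p))
    (hX01 : ∀ p ω, X p ω = 0 ∨ X p ω = 1)
    (hindep : iIndepFun X μ)
    (hmean1 : ∀ t, μ {ω | X (⟨0, by omega⟩, t) ω = 1} = ENNReal.ofReal (1 / 2 + Δ))
    (hmean2 : ∀ a : Fin A, a ≠ ⟨0, by omega⟩ →
      ∀ t, μ {ω | X (a, t) ω = 1} = ENNReal.ofReal (1 / 2))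
    (aSel : ℕ → Ω → Fin A)
    (w : ℕ → Fin A)
    (hwarm : ∀ t, 1 ≤ t → t ≤ A * L → ∀ ω, aSel t ω = w t)
    (hwL : ∀ a : Fin A, ((Finset.Icc 1 (A * L)).filter (fun t => w t = a)).card = L)
    (hhist : ∀ t, A * L < t →
      Measurable[⨆ s ∈ Finset.Ico 1 t, MeasurableSpace.comap
        (fun ω => (aSel s ω, X (aSel s ω, s) ω)) inferInstance] (aSel t))
    (hgreedy : ∀ t, A * L < t → ∀ ω,
      (∑ s ∈ (Finset.Ico 1 t).filter (fun s => aSel s ω = aSel t ω),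
            X (aSel t ω, s) ω)
          / ((Finset.Ico 1 t).filter (fun s => aSel s ω = aSel t ω)).card
        = ⨆ a : Fin A,
            (∑ s ∈ (Finset.Ico 1 t).filter (fun s => aSel s ω = a), X (a, s) ω)
              / ((Finset.Ico 1 t).filter (fun s => aSel s ω = a)).card)
    (T : ℕ) (hT : A * L ≤ T) :
    (1 / 2 - Δ) ^ L * (1 - (1 - (1 / 2 : ℝ) ^ L) ^ (A - 1)) * Δ * ((T : ℝ) - A * L)
      ≤ ∫ ω, (∑ t ∈ Finset.Icc 1 T,
          ((1 / 2 + Δ)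
            - (if aSel t ω = (⟨0, by omega⟩ : Fin A) then 1 / 2 + Δ else 1 / 2))) ∂μ := by
  set a₀ : Fin A := ⟨0, by omega⟩
  set S : Fin A → Finset ℕ := fun a => (Icc 1 (A * L)).filter (fun t => w t = a)
  set B := Bandit.allRewardsEq X S a₀ 0 ∩ ⋃ j ∈ univ.erase a₀, Bandit.allRewardsEq X S j 1
  set R : Ω → ℝ := fun ω => Bandit.regret (aSel · ω) a₀ (1 / 2 + Δ) (1 / 2) T
  have hμB : μ.real B = (1 / 2 - Δ) ^ L * (1 - (1 - (1 / 2 : ℝ) ^ L) ^ (A - 1)) := by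
    rw [Bandit.measureReal_allRewardsEq_inter_iUnion hXmeas hX01 hindep
      (fun t => by rw [measureReal_def, hmean1, ENNReal.toReal_ofReal (by linarith)])
      (fun a ha t => by rw [measureReal_def, hmean2 a ha, ENNReal.toReal_ofReal (by norm_num)])
      hwL, Fintype.card_fin]
    ring
  have hBR : B ⊆ {ω | Δ * ((T : ℝ) - A * L) ≤ R ω} := by
    rintro ω ⟨hzero, hone⟩
    obtain ⟨j, -, hj⟩ := Set.mem_iUnion₂.1 hone
    obtain ⟨s₀, hs₀⟩ : (S j).Nonempty := card_pos.1 (by rw [hwL]; omega)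
    obtain ⟨⟨hs₀1, hs₀N⟩, hws₀⟩ := by simpa only [S, mem_filter, mem_Icc] using hs₀
    have hnever := Bandit.greedy_ne_of_warmStart (x := (X · ω)) (a₀ := a₀)
      (fun t h1 h2 => hwarm t h1 h2 ω) (hgreedy · · ω)
      (fun s => by rcases hX01 (j, s) ω with h | h <;> simp [h])
      (fun s h1 h2 hws => Set.mem_iInter₂.1 hzero s (by simp [S, h1, h2, hws]))
      hs₀1 hs₀N hws₀ (by rw [Set.mem_iInter₂.1 hj s₀ hs₀]; exact one_pos)
    refine Eq.trans_le ?_ (Bandit.mul_sub_le_regret (by linarith) hT hnever)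
    push_cast
    ring
  have hR : Integrable R μ :=
    Bandit.integrable_regret (Bandit.measurable_selection_of_history hXmeas hwarm hhist)
  calc _ = Δ * ((T : ℝ) - A * L) * μ.real B := by rw [hμB]; ring
    _ ≤ Δ * ((T : ℝ) - A * L) * μ.real {ω | Δ * ((T : ℝ) - A * L) ≤ R ω} :=
        mul_le_mul_of_nonneg_left (measureReal_mono hBR)
          (mul_nonneg hΔ0.le (sub_nonneg.2 (by exact_mod_cast hT)))
    _ ≤ ∫ ω, R ω ∂μ :=
        mul_meas_ge_le_integral_of_nonneg
          (ae_of_all _ fun ω => Bandit.regret_nonneg _ (by linarith)) hR _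
end
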